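/- Let G be a graph and let x_0 be a vertex of degree two having two distinct neighbors, and let J′ = G/x_0 be the bicontraction of x_0. If J′ has an osculating bicycle (Q, Q′) such that neither Q nor Q′ is a cycle of G, then the union Q ∪ Q′ corresponds to an x_0-isolating even cycle in G. -/

import Mathlib

open SimpleGraph

variable {V : Type*}

/-- A cycle in a multigraph presented by an incidence map `inc : E → Sym2 V'`:
a cyclic sequence of `n ≥ 2` pairwise distinct vertices and pairwise distinct edges,
consecutive vertices being joined by the corresponding edge.  (Cycles of length two,
arising from a pair of parallel edges, are allowed.) -/
structure MultiCycle {V' E : Type*} (inc : E → Sym2 V') where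
  n : ℕ
  two_le : 2 ≤ n
  vert : ZMod n → V'
  edge : ZMod n → E
  vert_inj : Function.Injective vert
  edge_inj : Function.Injective edge
  inc_edge : ∀ i : ZMod n, inc (edge i) = s(vert i, vert (i + 1))

/-- The vertex map of the bicontraction `G/x₀` (where `x₀` has neighbors `x₁, x₂`):
the three vertices `x₀, x₁, x₂` are identified into the contraction vertex `none`,
and every other vertex is sent to itself. -/
def contrProj [DecidableEq V] (x₀ x₁ x₂ : V) (v : V) :
    Option {w : V // w ≠ x₀ ∧ w ≠ x₁ ∧ w ≠ x₂} :=
  if h : v = x₀ ∨ v = x₁ ∨ v = x₂ then none else some ⟨v, by tauto⟩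

/-- The edges of the bicontraction `J' = G/x₀`: all edges of `G` not incident with `x₀`
and distinct from `x₁x₂` (the contracted and loop edges are discarded);
each of them corresponds to an edge of `G`. -/
def contrEdges [DecidableEq V] (G : SimpleGraph V) (x₀ x₁ x₂ : V) :=
  {e : Sym2 V // e ∈ G.edgeSet ∧ x₀ ∉ e ∧ e ≠ s(x₁, x₂)}

/-- The incidence map of the bicontraction `J' = G/x₀`. -/
def contrInc [DecidableEq V] (G : SimpleGraph V) (x₀ x₁ x₂ : V)
    (e : contrEdges G x₀ x₁ x₂) : Sym2 (Option {w : V // w ≠ x₀ ∧ w ≠ x₁ ∧ w ≠ x₂}) :=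
  (e.1).map (contrProj x₀ x₁ x₂)

/-- A cycle of the bicontraction "is a cycle of `G`": the corresponding set of edges of
`G` is the edge set of a cycle of `G`. -/
def IsCycleOfG [DecidableEq V] (G : SimpleGraph V) {x₀ x₁ x₂ : V}
    (Q : MultiCycle (contrInc G x₀ x₁ x₂)) : Prop :=
  ∃ (u : V) (C : G.Walk u u), C.IsCycle ∧
    ∀ e : Sym2 V, e ∈ C.edges ↔ ∃ i, (Q.edge i).1 = e

/-!
A cycle of `G/x₀` that is not a cycle of `G` must pass through the contraction vertex:
otherwise it lifts verbatim to a cycle of `G`. Cutting it open there and lifting gives a walk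
of `G` between neighbours of `x₀`, of the same length and avoiding `x₀`; its ends are
distinct, for a lift that closes up is again a cycle of `G`, so it is a path between `x₁` and
`x₂`. Since `Q` and `Q'` meet only in the contraction vertex, their two lifted paths are
internally disjoint and glue to a cycle through `x₁` and `x₂` avoiding `x₀`, of length
`|Q| + |Q'|`, which is even by the parity assumption.
-/

theorem Sym2.exists_eq_mk_of_map_eq {α β : Type*} {f : α → β} {z : Sym2 α} {a b : β}
    (h : z.map f = s(a, b)) : ∃ x y, z = s(x, y) ∧ f x = a ∧ f y = b := by
  induction z using Sym2.ind with
  | _ x y =>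
    rcases Sym2.eq_iff.mp h with ⟨rfl, rfl⟩ | ⟨rfl, rfl⟩
    · exact ⟨x, y, rfl, rfl, rfl⟩
    · exact ⟨y, x, Sym2.eq_swap, rfl, rfl⟩

theorem ZMod.natCast_injOn_Iio (n : ℕ) : Set.InjOn (Nat.cast : ℕ → ZMod n) (Set.Iio n) :=
  fun j hj k hk h => by
    rwa [ZMod.natCast_eq_natCast_iff', Nat.mod_eq_of_lt hj, Nat.mod_eq_of_lt hk] at h

theorem ZMod.exists_add_natCast_eq {n : ℕ} [NeZero n] (i₀ i : ZMod n) :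
    ∃ j < n, i₀ + j = i :=
  ⟨(i - i₀).val, ZMod.val_lt _, by rw [ZMod.natCast_zmod_val]; ring⟩

namespace SimpleGraph.Walk

variable {G : SimpleGraph V}

def ofFn (f : ℕ → V) : (m : ℕ) → (∀ j < m, G.Adj (f j) (f (j + 1))) → G.Walk (f 0) (f m)
  | 0, _ => nil
  | m + 1, h => (ofFn f m fun j hj => h j (by omega)).concat (h m (by omega))

variable (f : ℕ → V) (m : ℕ) (hadj : ∀ j < m, G.Adj (f j) (f (j + 1)))

theorem support_ofFn : (ofFn f m hadj).support = (List.range (m + 1)).map f := by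
  induction m with
  | zero => rfl
  | succ m ih =>
    rw [ofFn, support_concat, ih, List.range_succ (n := m + 1), List.map_append]
    rfl

theorem edges_ofFn : (ofFn f m hadj).edges = (List.range m).map fun j => s(f j, f (j + 1)) := by
  induction m with
  | zero => rfl
  | succ m ih =>
    rw [ofFn, edges_concat, ih, List.range_succ, List.map_append, List.concat_eq_append]
    rfl

theorem length_ofFn : (ofFn f m hadj).length = m := by
  induction m with
  | zero => rfl
  | succ m ih => rw [ofFn, length_concat, ih]

variable {f m}

theorem isPath_ofFn (hinj : Set.InjOn f (Set.Iic m)) : (ofFn f m hadj).IsPath := by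
  refine IsPath.mk' ?_
  rw [support_ofFn]
  exact List.nodup_range.map_on fun j hj k hk h =>
    hinj (Nat.lt_succ_iff.mp (List.mem_range.mp hj)) (Nat.lt_succ_iff.mp (List.mem_range.mp hk)) h

theorem isCycle_ofFn (hm : m ≠ 0) (hinj : Set.InjOn f (Set.Iio m)) (hclose : f m = f 0)
    (hedges : (ofFn f m hadj).edges.Nodup) :
    ((ofFn f m hadj).copy rfl hclose).IsCycle := by
  set C := (ofFn f m hadj).copy rfl hclose
  have hsupp : C.support.dropLast = (List.range m).map f := by
    rw [support_copy, support_ofFn, List.range_succ, List.map_append, List.map_singleton,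
      List.dropLast_concat]
  refine (isCycle_def C).mpr ⟨⟨?_⟩, ?_, ?_⟩
  · rwa [edges_copy]
  · intro h
    have := congrArg length h
    rw [length_copy, length_ofFn, length_nil] at this
    exact hm this
  · rw [(tail_support_perm_dropLast_support C).nodup_iff, hsupp]
    exact List.nodup_range.map_on fun j hj k hk h =>
      hinj (List.mem_range.mp hj) (List.mem_range.mp hk) h

end SimpleGraph.Walk

namespace MultiCycle

variable {V' E : Type*} {inc : E → Sym2 V'} (Q : MultiCycle inc)

instance : NeZero Q.n := ⟨by have := Q.two_le; omega⟩

theorem exists_forall_vert_eq_imp_eq (v : V') : ∃ i₀, ∀ i, Q.vert i = v → i = i₀ := by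
  by_cases h : ∃ i₀, Q.vert i₀ = v
  · obtain ⟨i₀, rfl⟩ := h
    exact ⟨i₀, fun i hi => Q.vert_inj hi⟩
  · exact ⟨0, fun i hi => absurd ⟨i, hi⟩ h⟩

theorem nodup_map_range_edge (i₀ : ZMod Q.n) :
    ((List.range Q.n).map fun j : ℕ => Q.edge (i₀ + j)).Nodup :=
  List.nodup_range.map_on fun _ hj _ hk h => ZMod.natCast_injOn_Iio Q.n
    (List.mem_range.mp hj) (List.mem_range.mp hk) (add_left_cancel (Q.edge_inj h))

end MultiCycle

section Bicontraction

variable [DecidableEq V] {G : SimpleGraph V} {x₀ x₁ x₂ : V}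

theorem contrProj_eq_none_iff {v : V} :
    contrProj x₀ x₁ x₂ v = none ↔ v = x₀ ∨ v = x₁ ∨ v = x₂ := by
  unfold contrProj
  split <;> simp_all

theorem contrProj_eq_some_iff {v : V} {w : {w : V // w ≠ x₀ ∧ w ≠ x₁ ∧ w ≠ x₂}} :
    contrProj x₀ x₁ x₂ v = some w ↔ v = w.1 := by
  unfold contrProj
  split
  · next h =>
    refine iff_of_false (by simp) fun hv => ?_
    obtain ⟨h0, h1, h2⟩ := w.2
    rw [hv] at h
    tauto
  · exact ⟨fun h => congrArg Subtype.val (Option.some.inj h), fun h => by subst h; rfl⟩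

theorem eq_of_contrProj_eq {u v : V} (h : contrProj x₀ x₁ x₂ u = contrProj x₀ x₁ x₂ v)
    (hu : contrProj x₀ x₁ x₂ u ≠ none) : u = v := by
  obtain ⟨w, hw⟩ := Option.ne_none_iff_exists'.mp hu
  rw [contrProj_eq_some_iff.mp hw, contrProj_eq_some_iff.mp (h.symm.trans hw)]

/-- `f` lifts `Q`, cut open at position `i₀`, to the walk `f 0, …, f Q.n` of `G`. -/
structure MultiCycle.IsLift (Q : MultiCycle (contrInc G x₀ x₁ x₂)) (i₀ : ZMod Q.n)
    (f : ℕ → V) : Prop where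
  vert : ∀ j ≤ Q.n, contrProj x₀ x₁ x₂ (f j) = Q.vert (i₀ + j)
  edge : ∀ j < Q.n, (Q.edge (i₀ + j)).1 = s(f j, f (j + 1))

theorem MultiCycle.exists_isLift (Q : MultiCycle (contrInc G x₀ x₁ x₂)) (i₀ : ZMod Q.n)
    (hi₀ : ∀ i, Q.vert i = none → i = i₀) : ∃ f, Q.IsLift i₀ f := by
  -- Edge `i` of `Q` is the edge `u i — v i` of `G`. Consecutive edges agree at `v i = u (i + 1)`
  -- unless `Q.vert (i + 1)` is the contraction vertex, as `contrProj` is injective elsewhere.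
  choose u v huv hu hv using fun i => Sym2.exists_eq_mk_of_map_eq (Q.inc_edge i)
  refine ⟨fun j => if j < Q.n then u (i₀ + j) else v (i₀ + j - 1),
    ⟨fun j hj => ?_, fun j hj => ?_⟩⟩
  · by_cases hjn : j < Q.n
    · simp only [if_pos hjn, hu]
    · obtain rfl : j = Q.n := by omega
      simp only [lt_irrefl, if_false, hv, sub_add_cancel]
  · suffices hvu :
        v (i₀ + j) = if j + 1 < Q.n then u (i₀ + ↑(j + 1)) else v (i₀ + ↑(j + 1) - 1) by
      simp only [if_pos hj, huv, hvu]
    by_cases hj1 : j + 1 < Q.n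
    · rw [if_pos hj1, Nat.cast_succ, ← add_assoc]
      refine eq_of_contrProj_eq (by rw [hv, hu]) fun hnone => ?_
      have h0 : ((j + 1 : ℕ) : ZMod Q.n) = ((0 : ℕ) : ZMod Q.n) := by
        rw [hv] at hnone
        simpa [add_assoc] using hi₀ _ hnone
      exact absurd (ZMod.natCast_injOn_Iio Q.n hj1 (NeZero.pos Q.n) h0) (Nat.succ_ne_zero j)
    · rw [if_neg hj1, Nat.cast_succ, ← add_assoc, add_sub_cancel_right]

namespace MultiCycle.IsLift

variable {Q : MultiCycle (contrInc G x₀ x₁ x₂)} {i₀ : ZMod Q.n} {f : ℕ → V}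

theorem adj (hf : Q.IsLift i₀ f) : ∀ j < Q.n, G.Adj (f j) (f (j + 1)) := fun j hj => by
  rw [← mem_edgeSet, ← hf.edge j hj]
  exact (Q.edge _).2.1

theorem apply_ne (hf : Q.IsLift i₀ f) {j : ℕ} (hj : j ≤ Q.n) : f j ≠ x₀ := by
  obtain ⟨k, hk, hjk⟩ : ∃ k < Q.n, f j ∈ (Q.edge (i₀ + k)).1 := by
    rcases hj.lt_or_eq with hj | rfl
    · exact ⟨j, hj, hf.edge j hj ▸ Sym2.mem_mk_left _ _⟩
    · have hk : Q.n - 1 < Q.n := Nat.sub_lt (NeZero.pos _) Nat.one_pos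
      refine ⟨Q.n - 1, hk, ?_⟩
      rw [hf.edge _ hk, Nat.sub_add_cancel (NeZero.one_le)]
      exact Sym2.mem_mk_right _ _
  exact fun h => (Q.edge _).2.2.1 (h ▸ hjk)

theorem natCast_eq_of_apply_eq (hf : Q.IsLift i₀ f) {j k : ℕ} (hj : j ≤ Q.n) (hk : k ≤ Q.n)
    (h : f j = f k) : (j : ZMod Q.n) = k :=
  add_left_cancel (Q.vert_inj (by rw [← hf.vert j hj, ← hf.vert k hk, h]))

theorem injOn_Iio (hf : Q.IsLift i₀ f) : Set.InjOn f (Set.Iio Q.n) := fun _ hj _ hk h =>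
  ZMod.natCast_injOn_Iio Q.n hj hk (hf.natCast_eq_of_apply_eq hj.le hk.le h)

theorem injOn_Iic (hf : Q.IsLift i₀ f) (hne : f 0 ≠ f Q.n) : Set.InjOn f (Set.Iic Q.n) := by
  have hlt : ∀ j < Q.n, f j ≠ f Q.n := fun j hj h => by
    have h0 : (j : ZMod Q.n) = (0 : ℕ) := by
      rw [hf.natCast_eq_of_apply_eq hj.le le_rfl h, ZMod.natCast_self, Nat.cast_zero]
    obtain rfl := ZMod.natCast_injOn_Iio Q.n hj (Set.mem_Iio.mpr (NeZero.pos _)) h0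
    exact hne h
  intro j hj k hk h
  rcases (Set.mem_Iic.mp hj).lt_or_eq with hj | rfl <;>
    rcases (Set.mem_Iic.mp hk).lt_or_eq with hk | rfl
  · exact hf.injOn_Iio hj hk h
  · exact absurd h (hlt j hj)
  · exact absurd h.symm (hlt k hk)
  · rfl

theorem edges_ofFn (hf : Q.IsLift i₀ f) :
    (Walk.ofFn f Q.n hf.adj).edges = (List.range Q.n).map fun j : ℕ => (Q.edge (i₀ + j)).1 := by
  rw [Walk.edges_ofFn]
  exact List.map_congr_left fun j hj => (hf.edge j (List.mem_range.mp hj)).symm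

theorem nodup_edges_ofFn (hf : Q.IsLift i₀ f) : (Walk.ofFn f Q.n hf.adj).edges.Nodup := by
  have := (Q.nodup_map_range_edge i₀).map (f := fun e : contrEdges G x₀ x₁ x₂ => e.1)
    Subtype.val_injective
  rw [List.map_map] at this
  rw [hf.edges_ofFn]
  exact this

theorem mem_edges_ofFn (hf : Q.IsLift i₀ f) (e : Sym2 V) :
    e ∈ (Walk.ofFn f Q.n hf.adj).edges ↔ ∃ i, (Q.edge i).1 = e := by
  rw [hf.edges_ofFn, List.mem_map]
  constructor
  · rintro ⟨j, -, rfl⟩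
    exact ⟨_, rfl⟩
  · rintro ⟨i, rfl⟩
    obtain ⟨j, hj, rfl⟩ := ZMod.exists_add_natCast_eq i₀ i
    exact ⟨j, List.mem_range.mpr hj, rfl⟩

theorem isCycleOfG (hf : Q.IsLift i₀ f) (hclose : f Q.n = f 0) : IsCycleOfG G Q := by
  refine ⟨f 0, _, Walk.isCycle_ofFn hf.adj (NeZero.ne Q.n) hf.injOn_Iio hclose
    hf.nodup_edges_ofFn, fun e => ?_⟩
  rw [Walk.edges_copy, hf.mem_edges_ofFn]

end MultiCycle.IsLift

structure MultiCycle.IsPathLift (Q : MultiCycle (contrInc G x₀ x₁ x₂)) {a b : V}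
    (p : G.Walk a b) : Prop where
  isPath : p.IsPath
  length_eq : p.length = Q.n
  mem_edges : ∀ e, e ∈ p.edges ↔ ∃ i, (Q.edge i).1 = e
  ne_of_mem_support : ∀ v ∈ p.support, v ≠ x₀
  contrProj_mem : ∀ v ∈ p.support, contrProj x₀ x₁ x₂ v ∈ Set.range Q.vert

namespace MultiCycle.IsPathLift

variable {Q : MultiCycle (contrInc G x₀ x₁ x₂)} {a b : V} {p : G.Walk a b}

theorem reverse (hp : Q.IsPathLift p) : Q.IsPathLift p.reverse where
  isPath := (Walk.isPath_reverse_iff p).mpr hp.isPath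
  length_eq := by rw [Walk.length_reverse, hp.length_eq]
  mem_edges e := by rw [Walk.edges_reverse, List.mem_reverse, hp.mem_edges]
  ne_of_mem_support v hv := hp.ne_of_mem_support v (by simpa using hv)
  contrProj_mem v hv := hp.contrProj_mem v (by simpa using hv)

theorem exists_of_contrProj_eq_none (hp : Q.IsPathLift p) (hab : a ≠ b)
    (ha : contrProj x₀ x₁ x₂ a = none) (hb : contrProj x₀ x₁ x₂ b = none) :
    ∃ p' : G.Walk x₁ x₂, Q.IsPathLift p' := by
  have ha₀ := hp.ne_of_mem_support a p.start_mem_support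
  have hb₀ := hp.ne_of_mem_support b p.end_mem_support
  rcases contrProj_eq_none_iff.mp ha with rfl | rfl | rfl <;>
    rcases contrProj_eq_none_iff.mp hb with rfl | rfl | rfl <;>
    first
    | exact absurd rfl ha₀ | exact absurd rfl hb₀ | exact absurd rfl hab
    | exact ⟨p, hp⟩ | exact ⟨p.reverse, hp.reverse⟩

theorem disjoint_tail_support {Q' : MultiCycle (contrInc G x₀ x₁ x₂)} {p : G.Walk x₁ x₂}
    {q : G.Walk x₂ x₁} (hp : Q.IsPathLift p) (hq : Q'.IsPathLift q)
    (hmeet : ∃! w, w ∈ Set.range Q.vert ∧ w ∈ Set.range Q'.vert) :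
    p.support.tail.Disjoint q.support.tail := by
  have hnone : ∀ w ∈ Set.range Q.vert, w ∈ Set.range Q'.vert → w = none := by
    have hx₁ : contrProj x₀ x₁ x₂ x₁ = none :=
      contrProj_eq_none_iff.mpr (Or.inr (Or.inl rfl))
    obtain ⟨_, _, huniq⟩ := hmeet
    have hQ : none ∈ Set.range Q.vert := hx₁ ▸ hp.contrProj_mem _ p.start_mem_support
    have hQ' : none ∈ Set.range Q'.vert := hx₁ ▸ hq.contrProj_mem _ q.end_mem_support
    exact fun w hw hw' => (huniq w ⟨hw, hw'⟩).trans (huniq none ⟨hQ, hQ'⟩).symm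
  intro v hvp hvq
  have hvp' := List.mem_of_mem_tail hvp
  have hvq' := List.mem_of_mem_tail hvq
  rcases contrProj_eq_none_iff.mp (hnone _ (hp.contrProj_mem v hvp') (hq.contrProj_mem v hvq'))
    with rfl | rfl | rfl
  · exact hp.ne_of_mem_support _ hvp' rfl
  · exact (List.nodup_cons.mp (p.cons_tail_support ▸ hp.isPath.support_nodup)).1 hvp
  · exact (List.nodup_cons.mp (q.cons_tail_support ▸ hq.isPath.support_nodup)).1 hvq

end MultiCycle.IsPathLift

theorem MultiCycle.IsLift.exists_isPathLift {Q : MultiCycle (contrInc G x₀ x₁ x₂)}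
    {i₀ : ZMod Q.n} {f : ℕ → V} (hf : Q.IsLift i₀ f) (hne : f 0 ≠ f Q.n) :
    ∃ p : G.Walk (f 0) (f Q.n), Q.IsPathLift p := by
  refine ⟨_, ⟨Walk.isPath_ofFn hf.adj (hf.injOn_Iic hne), Walk.length_ofFn ..,
    hf.mem_edges_ofFn, fun v hv => ?_, fun v hv => ?_⟩⟩ <;>
  · obtain ⟨j, hj, rfl⟩ := List.mem_map.mp ((Walk.support_ofFn ..) ▸ hv)
    have hj : j ≤ Q.n := Nat.lt_succ_iff.mp (List.mem_range.mp hj)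
    first
    | exact hf.apply_ne hj
    | exact hf.vert j hj ▸ Set.mem_range_self _

theorem MultiCycle.exists_isPathLift (Q : MultiCycle (contrInc G x₀ x₁ x₂))
    (hQ : ¬ IsCycleOfG G Q) : ∃ p : G.Walk x₁ x₂, Q.IsPathLift p := by
  obtain ⟨i₀, hi₀⟩ := Q.exists_forall_vert_eq_imp_eq none
  obtain ⟨f, hf⟩ := Q.exists_isLift i₀ hi₀
  have hne : f 0 ≠ f Q.n := fun h => hQ (hf.isCycleOfG h.symm)
  have hproj : contrProj x₀ x₁ x₂ (f 0) = contrProj x₀ x₁ x₂ (f Q.n) := by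
    rw [hf.vert 0 (Nat.zero_le _), hf.vert Q.n le_rfl, ZMod.natCast_self, Nat.cast_zero]
  have hnone : contrProj x₀ x₁ x₂ (f 0) = none :=
    by_contra fun h => hne (eq_of_contrProj_eq hproj h)
  obtain ⟨p, hp⟩ := hf.exists_isPathLift hne
  exact hp.exists_of_contrProj_eq_none hne hnone (hproj ▸ hnone)

end Bicontraction

theorem osculating_bicycle_lemma_general [DecidableEq V] (G : SimpleGraph V)
    (x₀ x₁ x₂ : V) (hnbr : G.neighborSet x₀ = {x₁, x₂})
    (Q Q' : MultiCycle (contrInc G x₀ x₁ x₂))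
    (hmeet : ∃! w, w ∈ Set.range Q.vert ∧ w ∈ Set.range Q'.vert)
    (hparity : Even Q.n ↔ Even Q'.n)
    (hQ : ¬ IsCycleOfG G Q) (hQ' : ¬ IsCycleOfG G Q') :
    ∃ (u : V) (C : G.Walk u u), C.IsCycle ∧ Even C.length ∧
      (∀ e : Sym2 V, e ∈ C.edges ↔ ((∃ i, (Q.edge i).1 = e) ∨ (∃ i, (Q'.edge i).1 = e))) ∧
      x₀ ∉ C.support ∧ (∀ w : V, G.Adj x₀ w → w ∈ C.support) := by
  obtain ⟨p, hp⟩ := Q.exists_isPathLift hQ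
  obtain ⟨q, hq⟩ := Q'.exists_isPathLift hQ'
  replace hq := hq.reverse
  have hlen : 1 < p.length := by rw [hp.length_eq]; exact Q.two_le
  refine ⟨x₁, p.append q.reverse,
    hp.isPath.isCycle_append hq.isPath (hp.disjoint_tail_support hq hmeet) (Or.inl hlen),
    ?_, fun e => ?_, ?_, fun w hw => ?_⟩
  · rw [Walk.length_append, hp.length_eq, hq.length_eq]
    exact Nat.even_add.mpr hparity
  · rw [Walk.edges_append, List.mem_append, hp.mem_edges, hq.mem_edges]
  · rw [Walk.mem_support_append_iff]
    rintro (h | h)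
    · exact hp.ne_of_mem_support _ h rfl
    · exact hq.ne_of_mem_support _ h rfl
  · rw [← mem_neighborSet, hnbr] at hw
    rw [Walk.mem_support_append_iff]
    rcases hw with rfl | rfl
    · exact Or.inl p.start_mem_support
    · exact Or.inl p.end_mem_support

/-- **Osculating Bicycle Lemma.** Let `G` be a graph and `x₀` a vertex of
degree two with two distinct neighbors `x₁, x₂`, and let `J' = G/x₀` be the
bicontraction of `x₀`.  If `J'` has an osculating bicycle `(Q, Q')` — two cycles
meeting in exactly one vertex and having the same parity — such that neither `Q` nor
`Q'` is a cycle of `G`, then the union `Q ∪ Q'` corresponds to an `x₀`-isolating even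
cycle of `G`: an even cycle `C` of `G` with edge set the union of the edge sets of `Q`
and `Q'`, avoiding `x₀` and containing all neighbors of `x₀`. -/
theorem osculating_bicycle_lemma [DecidableEq V] (G : SimpleGraph V)
    (x₀ x₁ x₂ : V) (h12 : x₁ ≠ x₂) (hnbr : G.neighborSet x₀ = {x₁, x₂})
    (Q Q' : MultiCycle (contrInc G x₀ x₁ x₂))
    (hmeet : ∃! w, w ∈ Set.range Q.vert ∧ w ∈ Set.range Q'.vert)
    (hparity : Even Q.n ↔ Even Q'.n)
    (hQ : ¬ IsCycleOfG G Q) (hQ' : ¬ IsCycleOfG G Q') :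
    ∃ (u : V) (C : G.Walk u u), C.IsCycle ∧ Even C.length ∧
      (∀ e : Sym2 V, e ∈ C.edges ↔ ((∃ i, (Q.edge i).1 = e) ∨ (∃ i, (Q'.edge i).1 = e))) ∧
      x₀ ∉ C.support ∧ (∀ w : V, G.Adj x₀ w → w ∈ C.support) :=
  osculating_bicycle_lemma_general G x₀ x₁ x₂ hnbr Q Q' hmeet hparity hQ hQ'
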